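/- arXiv:1811.09606 — 2 statements merged into one kernel-verified Lean document; each statement's English description precedes it below -/
import Mathlib

section
/- For every m, n ≥ 1, any set of cells in a 2n×2m board with no two cells diagonally adjacent has cardinality at most 2mn, and this bound is achieved (e.g., by the set of all cells in even-indexed columns). -/
/-- Two cells are diagonally adjacent (a pawn attack) if their rows and
columns each differ by exactly 1. -/
def PawnAdj {a b : ℕ} (p q : Fin a × Fin b) : Prop :=
  |((p.1 : ℕ) : ℤ) - ((q.1 : ℕ) : ℤ)| = 1 ∧ |((p.2 : ℕ) : ℤ) - ((q.2 : ℕ) : ℤ)| = 1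

instance {a b : ℕ} (p q : Fin a × Fin b) : Decidable (PawnAdj p q) := by
  unfold PawnAdj; infer_instance

/-- A set of pawns is nonattacking if no two distinct cells are diagonally adjacent. -/
def Nonatt {a b : ℕ} (S : Finset (Fin a × Fin b)) : Prop :=
  ∀ p ∈ S, ∀ q ∈ S, p ≠ q → ¬ PawnAdj p q

instance {a b : ℕ} (S : Finset (Fin a × Fin b)) : Decidable (Nonatt S) := by
  unfold Nonatt; infer_instance


/-!
Cut the `2n × 2m` board into `nm` blocks of size `2 × 2` and colour it like a chessboard. The
two cells of a block that have the same colour are diagonally adjacent, so a nonattacking set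
meets each of the `2nm` classes (block, colour) at most once.
-/

open Finset

def blockColour {a b : ℕ} (p : Fin a × Fin b) : ℕ × ℕ × ℕ :=
  ((p.1 : ℕ) / 2, (p.2 : ℕ) / 2, ((p.1 : ℕ) + p.2) % 2)

lemma pawnAdj_of_blockColour_eq {a b : ℕ} {p q : Fin a × Fin b} (hpq : p ≠ q)
    (h : blockColour p = blockColour q) : PawnAdj p q := by
  simp only [blockColour, Prod.mk.injEq] at h
  have hval : (p.1 : ℕ) ≠ q.1 ∨ (p.2 : ℕ) ≠ q.2 := by
    by_contra! hc
    exact hpq (Prod.ext (Fin.ext hc.1) (Fin.ext hc.2))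
  constructor <;> (rw [Int.abs_eq_natAbs]; omega)

lemma Nonatt.injOn_blockColour {a b : ℕ} {S : Finset (Fin a × Fin b)} (hS : Nonatt S) :
    Set.InjOn blockColour (S : Set (Fin a × Fin b)) := by
  intro p hp q hq h
  by_contra hpq
  exact hS p hp q hq hpq (pawnAdj_of_blockColour_eq hpq h)

lemma blockColour_mem_range_product {n m : ℕ} (p : Fin (2 * n) × Fin (2 * m)) :
    blockColour p ∈ range n ×ˢ range m ×ˢ range 2 := by
  have := p.1.isLt
  have := p.2.isLt
  simp only [blockColour, mem_product, mem_range]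
  omega

theorem Nonatt.card_le {n m : ℕ} {S : Finset (Fin (2 * n) × Fin (2 * m))} (hS : Nonatt S) :
    #S ≤ 2 * m * n :=
  calc #S ≤ #(range n ×ˢ range m ×ˢ range 2) :=
        card_le_card_of_injOn blockColour (fun p _ => blockColour_mem_range_product p)
          hS.injOn_blockColour
    _ = 2 * m * n := by simp only [card_product, card_range]; ring

lemma nonatt_filter_even_col (a b : ℕ) :
    Nonatt ((univ : Finset (Fin a × Fin b)).filter fun p => (p.2 : ℕ) % 2 = 0) := by
  intro p hp q hq _ hadj
  simp only [mem_filter] at hp hq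
  have hcol := hadj.2
  rw [Int.abs_eq_natAbs] at hcol
  omega

lemma card_filter_val_mod_two_eq_zero (m : ℕ) : #{c : Fin (2 * m) | (c : ℕ) % 2 = 0} = m := by
  conv_rhs => rw [← card_range m]
  refine card_bij' (fun c _ => (c : ℕ) / 2)
    (fun k hk => ⟨2 * k, by rw [mem_range] at hk; omega⟩) ?_ ?_ ?_ ?_
  · intro c _
    rw [mem_range]
    omega
  · simp
  · intro c hc
    simp only [mem_filter, Fin.ext_iff] at hc ⊢
    omega
  · simp

theorem stmt2_general (m n : ℕ) :
    (∀ S : Finset (Fin (2 * n) × Fin (2 * m)), Nonatt S → S.card ≤ 2 * m * n) ∧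
    (Nonatt ((Finset.univ : Finset (Fin (2 * n) × Fin (2 * m))).filter
        (fun p => (p.2 : ℕ) % 2 = 0)) ∧
      ((Finset.univ : Finset (Fin (2 * n) × Fin (2 * m))).filter
        (fun p => (p.2 : ℕ) % 2 = 0)).card = 2 * m * n) := by
  refine ⟨fun S hS => hS.card_le, nonatt_filter_even_col _ _, ?_⟩
  rw [← univ_product_univ, filter_product_right fun c : Fin (2 * m) => (c : ℕ) % 2 = 0,
    card_product, card_filter_val_mod_two_eq_zero, card_univ, Fintype.card_fin]
  ring

theorem stmt2 (m n : ℕ) (hm : 1 ≤ m) (hn : 1 ≤ n) :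
    (∀ S : Finset (Fin (2 * n) × Fin (2 * m)), Nonatt S → S.card ≤ 2 * m * n) ∧
    (Nonatt ((Finset.univ : Finset (Fin (2 * n) × Fin (2 * m))).filter
        (fun p => (p.2 : ℕ) % 2 = 0)) ∧
      ((Finset.univ : Finset (Fin (2 * n) × Fin (2 * m))).filter
        (fun p => (p.2 : ℕ) % 2 = 0)).card = 2 * m * n) :=
  stmt2_general m n
end

section
/- Let f(m) denote the number of maximum (size 2m) nonattacking pawn arrangements on a 2×2m board. Then f satisfies the recurrence f(m) = f(m−1) + 2m + 1 for m ≥ 2, with f(1) = 4; hence f(m) = (m+1)². -/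
/-- `f m` is the number of maximum (size `2m`) nonattacking pawn arrangements
on a `2 × 2m` board. -/
def pawnCount (m : ℕ) : ℕ :=
  ((Finset.univ : Finset (Fin 2 × Fin (2 * m))).powerset.filter
      (fun S => S.card = 2 * m ∧ Nonatt S)).card


/-!
Colour the board like a chessboard. Pawns attack only along diagonals, so the squares of one
colour form a path of `2m` squares, which splits into `m` dominoes of mutually attacking squares
(columns `2t`, `2t + 1`). A nonattacking set of `2m` pawns thus has exactly one pawn on each of
the `2m` dominoes, and since the right square of a domino attacks the left square of the next one,
for each colour the dominoes carrying their pawn on the left form an initial segment, of some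
length `k ≤ m`. Every pair of lengths `(k₀, k₁)` arises, so `f m = (m + 1)²`.
-/

open Finset

lemma exists_fin_iff_lt_of_antitone {P : ℕ → Prop} (hP : Antitone P) (m : ℕ) :
    ∃ k : Fin (m + 1), ∀ t < m, P t ↔ t < k := by
  classical
  have hex : ∃ t, ¬P t ∨ m ≤ t := ⟨m, Or.inr le_rfl⟩
  refine ⟨⟨Nat.find hex, Nat.lt_succ_of_le (Nat.find_min' hex (Or.inr le_rfl))⟩,
    fun t ht => ⟨fun hPt => ?_, fun htk => ?_⟩⟩
  · by_contra hkt
    rcases Nat.find_spec hex with hPk | hmk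
    · exact hPk (hP (not_lt.1 hkt) hPt)
    · simp only [not_lt] at hkt; omega
  · exact not_not.1 (not_or.1 (Nat.find_min hex htk)).1

variable {n m : ℕ}

/-- The chessboard colouring: diagonally adjacent squares share a colour. -/
def cellColor (p : Fin 2 × Fin n) : Fin 2 := ⟨(p.1 + p.2) % 2, Nat.mod_lt _ two_pos⟩

def cellOf (e : Fin 2) (c : Fin n) : Fin 2 × Fin n := (⟨(e + c) % 2, Nat.mod_lt _ two_pos⟩, c)

lemma cellColor_cellOf (e : Fin 2) (c : Fin n) : cellColor (cellOf e c) = e := by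
  ext; simp only [cellColor, cellOf]; omega

lemma cellOf_snd (e : Fin 2) (c : Fin n) : (cellOf e c).2 = c := rfl

lemma eq_of_cellColor_eq {p q : Fin 2 × Fin n} (h : cellColor p = cellColor q)
    (hc : (p.2 : ℕ) = q.2) : p = q := by
  simp only [cellColor, Fin.ext_iff] at h
  ext <;> omega

lemma pawnAdj_iff {p q : Fin 2 × Fin n} :
    PawnAdj p q ↔ cellColor p = cellColor q ∧ ((p.2 : ℕ) + 1 = q.2 ∨ (q.2 : ℕ) + 1 = p.2) := by
  simp only [PawnAdj, cellColor, Fin.ext_iff, abs_eq (zero_le_one' ℤ)]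
  omega

/-- The board splits into `2m` dominoes: the two squares of one colour in columns `2t`, `2t + 1`.
They attack each other, so a nonattacking set has at most one pawn on each. -/
def domino (p : Fin 2 × Fin (2 * m)) : Fin 2 × Fin m := (cellColor p, ⟨p.2 / 2, by omega⟩)

lemma pawnAdj_of_domino_eq {p q : Fin 2 × Fin (2 * m)} (hpq : p ≠ q) (h : domino p = domino q) :
    PawnAdj p q := by
  simp only [domino, Prod.ext_iff, Fin.ext_iff] at h
  have hc : (p.2 : ℕ) ≠ q.2 := fun hc => hpq (eq_of_cellColor_eq (Fin.ext h.1) hc)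
  exact pawnAdj_iff.2 ⟨Fin.ext h.1, by omega⟩

lemma Nonatt.injOn_domino {S : Finset (Fin 2 × Fin (2 * m))} (hS : Nonatt S) :
    Set.InjOn domino (S : Set (Fin 2 × Fin (2 * m))) := fun p hp q hq h =>
  by_contra fun hpq => hS p hp q hq hpq (pawnAdj_of_domino_eq hpq h)

lemma Nonatt.card_eq_two_mul_iff {S : Finset (Fin 2 × Fin (2 * m))} (hS : Nonatt S) :
    S.card = 2 * m ↔ ∀ b, ∃ p ∈ S, domino p = b := by
  calc S.card = 2 * m ↔ (S.image domino).card = Fintype.card (Fin 2 × Fin m) := by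
        rw [card_image_of_injOn hS.injOn_domino]; simp
    _ ↔ _ := by rw [card_eq_iff_eq_univ, eq_univ_iff_forall]; simp only [mem_image]

/-- The pawn on domino `(e, t)` stands in its left column exactly when `t < k e`. -/
def thresholdConfig (m : ℕ) (k : Fin 2 → Fin (m + 1)) : Finset (Fin 2 × Fin (2 * m)) :=
  univ.filter fun p => (p.2 : ℕ) % 2 = 0 ↔ (p.2 : ℕ) < 2 * k (cellColor p)

lemma mem_thresholdConfig {k : Fin 2 → Fin (m + 1)} {p : Fin 2 × Fin (2 * m)} :
    p ∈ thresholdConfig m k ↔ ((p.2 : ℕ) % 2 = 0 ↔ (p.2 : ℕ) < 2 * k (cellColor p)) := by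
  simp [thresholdConfig]

lemma nonatt_thresholdConfig (k : Fin 2 → Fin (m + 1)) : Nonatt (thresholdConfig m k) := by
  intro p hp q hq _ hpq
  obtain ⟨he, hc⟩ := pawnAdj_iff.1 hpq
  rw [mem_thresholdConfig] at hp hq
  rw [← he] at hq
  omega

lemma card_thresholdConfig (k : Fin 2 → Fin (m + 1)) : (thresholdConfig m k).card = 2 * m := by
  refine (nonatt_thresholdConfig k).card_eq_two_mul_iff.2 fun ⟨e, t⟩ => ?_
  refine ⟨cellOf e ⟨2 * t + if (t : ℕ) < k e then 0 else 1, by split_ifs <;> omega⟩, ?_, ?_⟩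
  · simp only [mem_thresholdConfig, cellColor_cellOf, cellOf_snd, Fin.val_mk]
    split_ifs <;> omega
  · refine Prod.ext (cellColor_cellOf _ _) (Fin.ext ?_)
    simp only [domino, cellOf_snd]
    split_ifs <;> omega

lemma thresholdConfig_injective : Function.Injective (thresholdConfig m) := by
  suffices h : ∀ k k' e, k e < k' e → thresholdConfig m k ≠ thresholdConfig m k' by
    intro k k' hkk'
    funext e
    rcases lt_trichotomy (k e) (k' e) with hlt | heq | hgt
    exacts [(h k k' e hlt hkk').elim, heq, (h k' k e hgt hkk'.symm).elim]
  intro k k' e hlt hkk'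
  have hmem := congrArg (cellOf e ⟨2 * k e, by omega⟩ ∈ ·) hkk'
  simp only [mem_thresholdConfig, cellColor_cellOf, cellOf_snd, eq_iff_iff] at hmem
  omega

def HasPawnAt (S : Finset (Fin 2 × Fin n)) (e : Fin 2) (c : ℕ) : Prop :=
  ∃ p ∈ S, cellColor p = e ∧ (p.2 : ℕ) = c

lemma hasPawnAt_iff_mem {S : Finset (Fin 2 × Fin n)} {p : Fin 2 × Fin n} :
    HasPawnAt S (cellColor p) p.2 ↔ p ∈ S :=
  ⟨fun ⟨_, hq, he, hc⟩ => eq_of_cellColor_eq he hc ▸ hq, fun hp => ⟨p, hp, rfl, rfl⟩⟩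

lemma Nonatt.not_hasPawnAt_succ {S : Finset (Fin 2 × Fin n)} (hS : Nonatt S) {e : Fin 2} {c : ℕ}
    (h : HasPawnAt S e c) : ¬HasPawnAt S e (c + 1) := by
  rintro ⟨q, hq, rfl, hqc⟩
  obtain ⟨p, hp, he, hpc⟩ := h
  exact hS p hp q hq (fun h => by subst h; omega) (pawnAdj_iff.2 ⟨he, Or.inl (by omega)⟩)

section Maximum

variable {S : Finset (Fin 2 × Fin (2 * m))}

lemma Nonatt.hasPawnAt_two_mul_iff (hS : Nonatt S) (hcard : S.card = 2 * m) {t : ℕ} (ht : t < m)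
    (e : Fin 2) : HasPawnAt S e (2 * t) ↔ ¬HasPawnAt S e (2 * t + 1) := by
  refine ⟨hS.not_hasPawnAt_succ, fun h => ?_⟩
  obtain ⟨p, hp, hpb⟩ := hS.card_eq_two_mul_iff.1 hcard (e, ⟨t, ht⟩)
  simp only [domino, Prod.ext_iff, Fin.ext_iff] at hpb
  refine ⟨p, hp, Fin.ext hpb.1, ?_⟩
  by_contra hc
  exact h ⟨p, hp, Fin.ext hpb.1, by omega⟩

lemma Nonatt.antitone_hasPawnAt (hS : Nonatt S) (hcard : S.card = 2 * m) (e : Fin 2) :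
    Antitone fun t => HasPawnAt S e (2 * t) := by
  refine antitone_nat_of_succ_le fun t h => ?_
  have ht : t < m := by obtain ⟨p, -, -, hp⟩ := h; omega
  exact (hS.hasPawnAt_two_mul_iff hcard ht e).2 (hS.not_hasPawnAt_succ · h)

lemma Nonatt.exists_eq_thresholdConfig (hS : Nonatt S) (hcard : S.card = 2 * m) :
    ∃ k, S = thresholdConfig m k := by
  choose k hk using fun e => exists_fin_iff_lt_of_antitone (hS.antitone_hasPawnAt hcard e) m
  refine ⟨k, ext fun p => ?_⟩
  rw [← hasPawnAt_iff_mem, mem_thresholdConfig]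
  obtain ⟨t, ht | ht⟩ := Nat.even_or_odd' (p.2 : ℕ)
  · rw [ht, hk _ t (by omega)]; omega
  · rw [ht, ← not_iff_not, ← hS.hasPawnAt_two_mul_iff hcard (by omega), hk _ t (by omega)]; omega

end Maximum

lemma pawnCount_eq (m : ℕ) : pawnCount m = (m + 1) ^ 2 := by
  have hset : (univ.powerset.filter fun S => S.card = 2 * m ∧ Nonatt S) =
      univ.image (thresholdConfig m) := by
    ext S
    simp only [mem_filter, mem_powerset, subset_univ, true_and, mem_image, mem_univ]
    constructor
    · rintro ⟨hcard, hS⟩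
      obtain ⟨k, rfl⟩ := hS.exists_eq_thresholdConfig hcard
      exact ⟨k, rfl⟩
    · rintro ⟨k, rfl⟩
      exact ⟨card_thresholdConfig k, nonatt_thresholdConfig k⟩
  rw [pawnCount, hset, card_image_of_injective _ thresholdConfig_injective, card_univ,
    Fintype.card_fun, Fintype.card_fin, Fintype.card_fin]

theorem stmt18 :
    pawnCount 1 = 4 ∧
    (∀ m : ℕ, 2 ≤ m → pawnCount m = pawnCount (m - 1) + 2 * m + 1) ∧
    (∀ m : ℕ, 1 ≤ m → pawnCount m = (m + 1) ^ 2) := by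
  refine ⟨pawnCount_eq 1, fun m hm => ?_, fun m _ => pawnCount_eq m⟩
  rw [pawnCount_eq, pawnCount_eq, Nat.sub_add_cancel (by omega : 1 ≤ m)]
  ring
end
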